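/- Let M be a complex square matrix with ‖M‖ ≤ 1 (a contraction). Then ‖I − M‖ ≤ √(2 ‖I − Re M‖), where Re M = (M + M†)/2 and ‖·‖ is the operator norm. -/

import Mathlib

/-!
Write `b = 1 - a`. Expanding gives `b⋆b = 2 (1 - Re a) - (1 - a⋆a)`, and `a⋆a ≤ 1` because `a` is a
contraction, so `b⋆b ≤ 2 (1 - Re a)`. Since `0 ≤ b⋆b`, norms are monotone here, and the
C⋆-identity `‖b⋆b‖ = ‖b‖²` gives `‖b‖² ≤ 2 ‖1 - Re a‖`. This works in any unital C⋆-algebra;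
matrices with the operator norm are one via `Matrix.toEuclideanCLM`.
-/

open scoped ComplexOrder Kronecker
open Matrix

noncomputable def opNorm {m n : Type*} [Fintype m] [Fintype n] [DecidableEq n]
    (A : Matrix m n ℂ) : ℝ :=
  ‖(Matrix.toEuclideanLin A).toContinuousLinearMap‖

noncomputable def traceNorm {n : Type*} [Fintype n] [DecidableEq n] (A : Matrix n n ℂ) : ℝ :=
  ((Matrix.posSemidef_conjTranspose_mul_self A).1.eigenvectorUnitary.1 *
      diagonal (((↑) : ℝ → ℂ) ∘ Real.sqrt ∘ (Matrix.posSemidef_conjTranspose_mul_self A).1.eigenvalues) *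
      (star (Matrix.posSemidef_conjTranspose_mul_self A).1.eigenvectorUnitary : Matrix n n ℂ)).trace.re

noncomputable def frobNorm {n : Type*} [Fintype n] (A : Matrix n n ℂ) : ℝ :=
  Real.sqrt ((Aᴴ * A).trace.re)

lemma star_one_sub_mul_one_sub {R : Type*} [Ring R] [StarRing R] [Module ℂ R] (a : R) :
    star (1 - a) * (1 - a) = (2 : ℂ) • (1 - (1/2 : ℂ) • (a + star a)) - (1 - star a * a) := by
  simp only [star_sub, star_one, smul_sub, smul_smul]
  norm_num
  noncomm_ring
  module

section CStarAlgebra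

variable {A : Type*} [CStarAlgebra A] [PartialOrder A] [StarOrderedRing A]

lemma CStarAlgebra.star_mul_self_le_one_of_norm_le_one {a : A} (ha : ‖a‖ ≤ 1) :
    star a * a ≤ 1 := by
  rw [← CStarAlgebra.norm_le_one_iff_of_nonneg _ (star_mul_self_nonneg a),
    CStarRing.norm_star_mul_self]
  exact mul_le_one₀ ha (norm_nonneg a) ha

theorem CStarAlgebra.norm_one_sub_le_of_norm_le_one {a : A} (ha : ‖a‖ ≤ 1) :
    ‖1 - a‖ ≤ √(2 * ‖1 - (1/2 : ℂ) • (a + star a)‖) := by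
  have hle : star (1 - a) * (1 - a) ≤ (2 : ℂ) • (1 - (1/2 : ℂ) • (a + star a)) := by
    rw [star_one_sub_mul_one_sub]
    exact sub_le_self _ (sub_nonneg.mpr (star_mul_self_le_one_of_norm_le_one ha))
  apply Real.le_sqrt_of_sq_le
  calc ‖1 - a‖ ^ 2 = ‖star (1 - a) * (1 - a)‖ := by rw [sq, CStarRing.norm_star_mul_self]
    _ ≤ ‖(2 : ℂ) • (1 - (1/2 : ℂ) • (a + star a))‖ :=
      norm_le_norm_of_nonneg_of_le (star_mul_self_nonneg _) hle
    _ = 2 * ‖1 - (1/2 : ℂ) • (a + star a)‖ := by rw [norm_smul]; norm_num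

end CStarAlgebra

lemma opNorm_eq_norm_toEuclideanCLM {n : Type*} [Fintype n] [DecidableEq n] (A : Matrix n n ℂ) :
    opNorm A = ‖toEuclideanCLM (𝕜 := ℂ) A‖ :=
  rfl

/-- For a contraction `M`, `‖I − M‖ ≤ √(2‖I − Re M‖)`. -/
theorem norm_one_sub_le_of_contraction {d : ℕ} (M : Matrix (Fin d) (Fin d) ℂ)
    (hM : opNorm M ≤ 1) :
    opNorm (1 - M) ≤
      Real.sqrt (2 * opNorm (1 - (1/2 : ℂ) • (M + Mᴴ))) := by
  rw [opNorm_eq_norm_toEuclideanCLM] at hM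
  simpa only [opNorm_eq_norm_toEuclideanCLM, ← star_eq_conjTranspose, map_sub, map_one, map_smul,
    map_add, map_star] using CStarAlgebra.norm_one_sub_le_of_norm_le_one hM
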